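/- arXiv:1408.1522 — 2 statements merged into one kernel-verified Lean document; each statement's English description precedes it below -/
import Mathlib

section
/- Let m, n be nonzero distinct integers such that −m = u² and n − m = v² for positive integers u, v. Then the four points (u² − uv, ±v(u² − uv)) and (u² + uv, ±v(u² + uv)) are points of order 4 on the elliptic curve y² = x(x+m)(x+n). -/
/-- The elliptic curve `y² = x(x + m)(x + n)` over `ℚ`. -/
def E (m n : ℤ) : WeierstrassCurve.Affine ℚ where
  a₁ := 0
  a₂ := (m : ℚ) + n
  a₃ := 0
  a₄ := (m : ℚ) * n
  a₆ := 0

/-!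
On `y² = x(x + m)(x + n)`, a point `P = (x, y)` with `y ≠ 0` and `x² + 2mx + mn = 0` has a
tangent of slope `y / (x + m)`, i.e. the tangent at `P` passes through the `2`-torsion point
`(-m, 0)`.
Hence `2P = (-m, 0)` and `P` has order `4`. For `m = -u²`, `n = v² - u²` the condition reads
`(x - u²)² = u²v²`, whose roots are `x = u² ± uv`, and then `y² = v²x²`.
-/

theorem addOrderOf_eq_four_of_addOrderOf_two_nsmul {G : Type*} [AddMonoid G] {a : G}
    (h : addOrderOf (2 • a) = 2) : addOrderOf a = 4 := by
  have := Nat.fact_prime_two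
  refine addOrderOf_eq_prime_pow (p := 2) (n := 1) ?_ ?_
  · rw [pow_one, ← AddMonoid.addOrderOf_eq_one_iff, h]
    decide
  · rw [sq, mul_nsmul]
    nth_rw 1 [← h]
    exact addOrderOf_nsmul_eq_zero _

namespace WeierstrassCurve.Affine.Point

variable {F : Type*} [Field F] [DecidableEq F] {W : WeierstrassCurve.Affine F}

theorem addOrderOf_some_of_Y_eq {x y : F} {h : W.Nonsingular x y} (hy : y = W.negY x y) :
    addOrderOf (some _ _ h) = 2 := by
  have := Nat.fact_prime_two
  exact addOrderOf_eq_prime (by rw [two_nsmul, add_self_of_Y_eq hy]) (some_ne_zero h)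

end WeierstrassCurve.Affine.Point

open WeierstrassCurve.Affine

namespace E

variable {m n : ℤ} {x y : ℚ}

theorem equation_iff : (E m n).Equation x y ↔ y ^ 2 = x * (x + m) * (x + n) := by
  rw [WeierstrassCurve.Affine.equation_iff]
  simp only [E]
  constructor <;> intro h <;> linear_combination h

theorem negY_eq : (E m n).negY x y = -y := by
  simp [negY, E]

theorem Y_ne_negY (hy : y ≠ 0) : y ≠ (E m n).negY x y := by
  rw [negY_eq]
  intro h
  exact hy (by linarith)

theorem nonsingular_of_Y_ne_zero (hxy : y ^ 2 = x * (x + m) * (x + n)) (hy : y ≠ 0) :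
    (E m n).Nonsingular x y :=
  (nonsingular_iff x y).2 ⟨equation_iff.2 hxy, Or.inr (Y_ne_negY hy)⟩

theorem X_add_ne_zero_of_Y_ne_zero (hxy : y ^ 2 = x * (x + m) * (x + n)) (hy : y ≠ 0) :
    x + m ≠ 0 := by
  rintro h
  apply hy
  simpa [h] using hxy

section Doubling

variable (hxy : y ^ 2 = x * (x + m) * (x + n)) (hy : y ≠ 0) (hx : x ^ 2 + 2 * m * x + m * n = 0)
include hxy hy hx

theorem slope_self : (E m n).slope x x y y = y / (x + m) := by
  rw [slope_of_Y_ne rfl (Y_ne_negY hy), negY_eq]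
  simp only [E]
  rw [div_eq_div_iff (by intro h; exact hy (by linarith)) (X_add_ne_zero_of_Y_ne_zero hxy hy)]
  linear_combination (x + m) * hx - 2 * hxy

theorem addX_self : (E m n).addX x x ((E m n).slope x x y y) = -m := by
  have := X_add_ne_zero_of_Y_ne_zero hxy hy
  rw [slope_self hxy hy hx]
  simp only [addX, E]
  field_simp
  linear_combination hxy - (x + m) * hx

theorem addY_self : (E m n).addY x x y ((E m n).slope x x y y) = 0 := by
  have := X_add_ne_zero_of_Y_ne_zero hxy hy
  rw [addY, negAddY, addX_self hxy hy hx, slope_self hxy hy hx, negY_eq]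
  field_simp
  ring

theorem addOrderOf_some_eq_four (h : (E m n).Nonsingular x y) :
    addOrderOf (Point.some _ _ h) = 4 := by
  apply addOrderOf_eq_four_of_addOrderOf_two_nsmul
  rw [two_nsmul, Point.add_self_of_Y_ne (Y_ne_negY hy)]
  apply Point.addOrderOf_some_of_Y_eq
  rw [addY_self hxy hy hx, negY_eq, neg_zero]

end Doubling

theorem exists_addOrderOf_eq_four {a b x y : ℚ} (hm : (m : ℚ) = -a ^ 2)
    (hn : (n : ℚ) = b ^ 2 - a ^ 2) (hb : b ≠ 0) (hx0 : x ≠ 0) (hy : y ^ 2 = (b * x) ^ 2)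
    (hx : (x - a ^ 2) ^ 2 = (a * b) ^ 2) :
    ∃ h : (E m n).Nonsingular x y, addOrderOf (Point.some _ _ h) = 4 := by
  have hy0 : y ≠ 0 := by
    rintro rfl
    exact mul_ne_zero hb hx0 (pow_eq_zero_iff two_ne_zero |>.1 hy.symm)
  have hxy : y ^ 2 = x * (x + m) * (x + n) := by
    rw [hm, hn]
    linear_combination hy - x * hx
  exact ⟨nonsingular_of_Y_ne_zero hxy hy0,
    addOrderOf_some_eq_four hxy hy0 (by rw [hm, hn]; linear_combination hx) _⟩

end E

theorem points_of_order_four_general (m n : ℤ) (hn : n ≠ 0)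
    (u v : ℕ) (hu : 0 < u) (hv : 0 < v) (hmu : -m = (u : ℤ) ^ 2) (hnv : n - m = (v : ℤ) ^ 2) :
    (∃ h : (E m n).Nonsingular ((u : ℚ) ^ 2 - u * v) ((v : ℚ) * ((u : ℚ) ^ 2 - u * v)),
      addOrderOf (WeierstrassCurve.Affine.Point.some _ _ h) = 4) ∧
    (∃ h : (E m n).Nonsingular ((u : ℚ) ^ 2 - u * v) (-((v : ℚ) * ((u : ℚ) ^ 2 - u * v))),
      addOrderOf (WeierstrassCurve.Affine.Point.some _ _ h) = 4) ∧
    (∃ h : (E m n).Nonsingular ((u : ℚ) ^ 2 + u * v) ((v : ℚ) * ((u : ℚ) ^ 2 + u * v)),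
      addOrderOf (WeierstrassCurve.Affine.Point.some _ _ h) = 4) ∧
    (∃ h : (E m n).Nonsingular ((u : ℚ) ^ 2 + u * v) (-((v : ℚ) * ((u : ℚ) ^ 2 + u * v))),
      addOrderOf (WeierstrassCurve.Affine.Point.some _ _ h) = 4) := by
  have hm : (m : ℚ) = -u ^ 2 := by
    have : (-m : ℚ) = u ^ 2 := by exact_mod_cast hmu
    linear_combination -this
  have hn' : (n : ℚ) = v ^ 2 - u ^ 2 := by
    have : (n - m : ℚ) = v ^ 2 := by exact_mod_cast hnv
    linear_combination this + hm
  have huv : (u : ℚ) ≠ v := by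
    rintro huv
    apply hn
    exact_mod_cast show (n : ℚ) = 0 by rw [hn', huv, sub_self]
  have hminus : (u : ℚ) ^ 2 - u * v ≠ 0 := by
    rw [sq, ← mul_sub]
    exact mul_ne_zero (by positivity) (sub_ne_zero.2 huv)
  have hplus : (u : ℚ) ^ 2 + u * v ≠ 0 := by positivity
  have hv0 : (v : ℚ) ≠ 0 := by positivity
  exact ⟨E.exists_addOrderOf_eq_four hm hn' hv0 hminus (by ring) (by ring),
    E.exists_addOrderOf_eq_four hm hn' hv0 hminus (by ring) (by ring),
    E.exists_addOrderOf_eq_four hm hn' hv0 hplus (by ring) (by ring),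
    E.exists_addOrderOf_eq_four hm hn' hv0 hplus (by ring) (by ring)⟩

/-- If `−m = u²` and `n − m = v²`, then the four points `(u² ± uv, ±v(u² ± uv))` are points
of order 4 on `y² = x(x + m)(x + n)`. -/
theorem points_of_order_four (m n : ℤ) (hm : m ≠ 0) (hn : n ≠ 0) (hmn : m ≠ n)
    (u v : ℕ) (hu : 0 < u) (hv : 0 < v) (hmu : -m = (u : ℤ) ^ 2) (hnv : n - m = (v : ℤ) ^ 2) :
    (∃ h : (E m n).Nonsingular ((u : ℚ) ^ 2 - u * v) ((v : ℚ) * ((u : ℚ) ^ 2 - u * v)),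
      addOrderOf (WeierstrassCurve.Affine.Point.some _ _ h) = 4) ∧
    (∃ h : (E m n).Nonsingular ((u : ℚ) ^ 2 - u * v) (-((v : ℚ) * ((u : ℚ) ^ 2 - u * v))),
      addOrderOf (WeierstrassCurve.Affine.Point.some _ _ h) = 4) ∧
    (∃ h : (E m n).Nonsingular ((u : ℚ) ^ 2 + u * v) ((v : ℚ) * ((u : ℚ) ^ 2 + u * v)),
      addOrderOf (WeierstrassCurve.Affine.Point.some _ _ h) = 4) ∧
    (∃ h : (E m n).Nonsingular ((u : ℚ) ^ 2 + u * v) (-((v : ℚ) * ((u : ℚ) ^ 2 + u * v))),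
      addOrderOf (WeierstrassCurve.Affine.Point.some _ _ h) = 4) :=
  points_of_order_four_general m n hn u v hu hv hmu hnv
end

section
/- Let a, b be coprime nonzero integers with a+2b ≠ 0, 2a+b ≠ 0, a+b ≠ 0, and set m = a³(a+2b), n = b³(b+2a). Then the points (a²b², ±a²b²(a+b)²) are points of order 3 on the elliptic curve y² = x(x+m)(x+n). -/
/-!
A point `P = (x, y)` with `y ≠ -y` has order 3 exactly when `2P = -P`, i.e. when doubling `P`
returns the same `x`-coordinate. For `y² = f(x) = x(x + m)(x + n)` the tangent slope is
`λ = f'(x) / 2y` and `x(2P) = λ² - (m + n) - 2x`, so the condition reads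
`f'(x)² = 4y²(3x + m + n)`. At `x = a²b²`, `y = ±a²b²(a + b)²` this, like the curve equation,
is a polynomial identity in `a` and `b`.
-/

open WeierstrassCurve.Affine

namespace WeierstrassCurve.Affine

variable {F : Type*} [Field F] [DecidableEq F] {W : WeierstrassCurve.Affine F}

lemma addOrderOf_some_eq_three_of_addX_eq {x y : F} (h : W.Nonsingular x y)
    (hy : y ≠ W.negY x y) (hx : W.addX x x (W.slope x x y y) = x) :
    addOrderOf (Point.some _ _ h) = 3 := by
  have hY : W.negAddY x x y (W.slope x x y y) = y := by
    rw [negAddY, hx, sub_self, mul_zero, zero_add]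
  have two_nsmul_eq_neg : 2 • Point.some _ _ h = -Point.some _ _ h := by
    rw [two_nsmul, Point.add_self_of_Y_ne' hy]
    congr
  have three_nsmul_eq_zero : 3 • Point.some _ _ h = 0 := by
    rw [succ_nsmul, two_nsmul_eq_neg, neg_add_cancel]
  have : Fact (Nat.Prime 3) := ⟨Nat.prime_three⟩
  exact addOrderOf_eq_prime three_nsmul_eq_zero (Point.some_ne_zero h)

end WeierstrassCurve.Affine

section E

variable {m n : ℤ} {x y : ℚ}

lemma E_negY : (E m n).negY x y = -y := by
  simp [negY, E]

lemma E_Y_ne_negY (hy : y ≠ 0) : y ≠ (E m n).negY x y := by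
  rwa [E_negY, ne_eq, self_eq_neg]

lemma E_equation_iff : (E m n).Equation x y ↔ y ^ 2 = x * (x + m) * (x + n) := by
  rw [equation_iff]
  simp only [E]
  constructor <;> intro h <;> linear_combination h

lemma E_nonsingular (hy : y ≠ 0) (heq : y ^ 2 = x * (x + m) * (x + n)) :
    (E m n).Nonsingular x y := by
  rw [nonsingular_iff]
  exact ⟨E_equation_iff.mpr heq, Or.inr (E_Y_ne_negY hy)⟩

lemma E_addX_slope (hy : y ≠ 0) :
    (E m n).addX x x ((E m n).slope x x y y) =
      ((3 * x ^ 2 + 2 * (m + n) * x + m * n) / (2 * y)) ^ 2 - (m + n) - 2 * x := by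
  rw [slope_of_Y_ne rfl (E_Y_ne_negY hy), E_negY, addX]
  simp only [E]
  ring

lemma exists_addOrderOf_E_eq_three (hy : y ≠ 0) (heq : y ^ 2 = x * (x + m) * (x + n))
    (hdouble : (3 * x ^ 2 + 2 * (m + n) * x + m * n) ^ 2 = 4 * y ^ 2 * (3 * x + m + n)) :
    ∃ h : (E m n).Nonsingular x y, addOrderOf (Point.some _ _ h) = 3 := by
  refine ⟨E_nonsingular hy heq,
    addOrderOf_some_eq_three_of_addX_eq _ (E_Y_ne_negY hy) ?_⟩
  rw [E_addX_slope hy, div_pow, hdouble]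
  field_simp
  ring

end E

theorem points_of_order_three_general (a b : ℤ) (ha : a ≠ 0) (hb : b ≠ 0)
    (h3 : a + b ≠ 0)
    (m n : ℤ) (hm : m = a ^ 3 * (a + 2 * b)) (hn : n = b ^ 3 * (b + 2 * a)) :
    (∃ h : (E m n).Nonsingular ((a : ℚ) ^ 2 * b ^ 2) ((a : ℚ) ^ 2 * b ^ 2 * ((a : ℚ) + b) ^ 2),
      addOrderOf (WeierstrassCurve.Affine.Point.some _ _ h) = 3) ∧
    (∃ h : (E m n).Nonsingular ((a : ℚ) ^ 2 * b ^ 2)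
        (-((a : ℚ) ^ 2 * b ^ 2 * ((a : ℚ) + b) ^ 2)),
      addOrderOf (WeierstrassCurve.Affine.Point.some _ _ h) = 3) := by
  subst hm hn
  have hsum : (a : ℚ) + b ≠ 0 := by exact_mod_cast h3
  have hy : (a : ℚ) ^ 2 * b ^ 2 * ((a : ℚ) + b) ^ 2 ≠ 0 := by positivity
  refine ⟨exists_addOrderOf_E_eq_three hy ?_ ?_,
    exists_addOrderOf_E_eq_three (neg_ne_zero.mpr hy) ?_ ?_⟩ <;>
  · push_cast
    ring

/-- For coprime nonzero `a, b` with `a + 2b ≠ 0`, `2a + b ≠ 0`, `a + b ≠ 0`, and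
`m = a³(a + 2b)`, `n = b³(b + 2a)`, the points `(a²b², ±a²b²(a + b)²)` have order 3
on `y² = x(x + m)(x + n)`. -/
theorem points_of_order_three (a b : ℤ) (ha : a ≠ 0) (hb : b ≠ 0) (hab : IsCoprime a b)
    (h1 : a + 2 * b ≠ 0) (h2 : 2 * a + b ≠ 0) (h3 : a + b ≠ 0)
    (m n : ℤ) (hm : m = a ^ 3 * (a + 2 * b)) (hn : n = b ^ 3 * (b + 2 * a)) :
    (∃ h : (E m n).Nonsingular ((a : ℚ) ^ 2 * b ^ 2) ((a : ℚ) ^ 2 * b ^ 2 * ((a : ℚ) + b) ^ 2),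
      addOrderOf (WeierstrassCurve.Affine.Point.some _ _ h) = 3) ∧
    (∃ h : (E m n).Nonsingular ((a : ℚ) ^ 2 * b ^ 2)
        (-((a : ℚ) ^ 2 * b ^ 2 * ((a : ℚ) + b) ^ 2)),
      addOrderOf (WeierstrassCurve.Affine.Point.some _ _ h) = 3) :=
  points_of_order_three_general a b ha hb h3 m n hm hn
end
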